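/- arXiv:1907.08874 — 3 statements merged into one kernel-verified Lean document; each statement's English description precedes it below -/
import Mathlib

section
/- Consider a T-step control task. Suppose for each t ∈ {1,…,T}: C_t = p_{t−1}·C_{t,c} + (1−p_{t−1})·C_{t,e} with C_{t,c}, C_{t,e} ∈ [0, C_max], C_{t,c} ≤ C*_{t,c} + ε_{t,c}·C_max, C*_{t,c} ≥ 0, and 1 − p_t ≤ Σ_{i=1}^t ε_i where ε_t = p_{t−1}ε_{t,c} + (1−p_{t−1})ε_{t,e} and (1−p_t) = (1−p_{t−1}) + p_{t−1}ε_{t,c}, all p's in [0,1] and ε's in [0,1]. Then for each t, C_t ≤ C*_{t,c} + C_max·Σ_{i=1}^t ε_i. -/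
/-- Per-step cost bound in the compounding-error analysis:
`C_t ≤ C*_{t,c} + C_max·Σ_{i=1}^t ε_i`. -/
theorem stmt_4 (T : ℕ) (Cmax : ℝ) (hCmax : 0 ≤ Cmax)
    (C Cc Ce Cstar ε εc εe p : ℕ → ℝ)
    (hp : ∀ t, t ≤ T → p t ∈ Set.Icc (0:ℝ) 1) (hp0 : p 0 = 1)
    (hεc : ∀ t ∈ Finset.Icc 1 T, εc t ∈ Set.Icc (0:ℝ) 1)
    (hεe : ∀ t ∈ Finset.Icc 1 T, εe t ∈ Set.Icc (0:ℝ) 1)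
    (hεdef : ∀ t ∈ Finset.Icc 1 T, ε t = p (t - 1) * εc t + (1 - p (t - 1)) * εe t)
    (hprec : ∀ t ∈ Finset.Icc 1 T, 1 - p t = (1 - p (t - 1)) + p (t - 1) * εc t)
    (hCc : ∀ t ∈ Finset.Icc 1 T, Cc t ∈ Set.Icc 0 Cmax)
    (hCe : ∀ t ∈ Finset.Icc 1 T, Ce t ∈ Set.Icc 0 Cmax)
    (hCdef : ∀ t ∈ Finset.Icc 1 T, C t = p (t - 1) * Cc t + (1 - p (t - 1)) * Ce t)
    (hCcb : ∀ t ∈ Finset.Icc 1 T, Cc t ≤ Cstar t + εc t * Cmax)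
    (hCstar : ∀ t ∈ Finset.Icc 1 T, 0 ≤ Cstar t)
    (hpsum : ∀ t ∈ Finset.Icc 1 T, 1 - p t ≤ ∑ i ∈ Finset.Icc 1 t, ε i) :
    ∀ t ∈ Finset.Icc 1 T, C t ≤ Cstar t + Cmax * ∑ i ∈ Finset.Icc 1 t, ε i := by
  intro t ht
  obtain ⟨ht1, htT⟩ := Finset.mem_Icc.mp ht
  have hpt1 : p (t - 1) ∈ Set.Icc (0:ℝ) 1 := hp _ (le_trans (Nat.sub_le t 1) htT)
  obtain ⟨hp0', hp1'⟩ := hpt1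
  have h1p : 0 ≤ 1 - p (t - 1) := by linarith
  have hCe' := hCe t ht
  have hCcb' := hCcb t ht
  have hCstar' := hCstar t ht
  have key : C t ≤ Cstar t + Cmax * (1 - p t) := by
    rw [hCdef t ht, hprec t ht]
    have h1 : p (t-1) * Cc t ≤ p (t-1) * (Cstar t + εc t * Cmax) :=
      mul_le_mul_of_nonneg_left hCcb' hp0'
    have h2 : (1 - p (t-1)) * Ce t ≤ (1 - p (t-1)) * Cmax :=
      mul_le_mul_of_nonneg_left hCe'.2 h1p
    nlinarith [mul_nonneg hp0' hCstar']
  have := hpsum t ht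
  nlinarith
end

section
/- Consider a T-step control task where the learner π is trained via supervised learning on the expert's distribution with expected 0-1 surrogate loss ε, i.e., (1/T)Σ_{t=1}^T ε_t ≤ ε where ε_t is the probability π disagrees with the expert π* at step t (under the appropriate conditional distributions), and immediate costs lie in [0, C_max]. Formally: given p_t, ε_t, C_t, C*_{t,c} satisfying the recurrences (1−p_t) = (1−p_{t−1}) + p_{t−1}ε_{t,c}, C_t = p_{t−1}C_{t,c} + (1−p_{t−1})C_{t,e}, C_{t,c} ≤ C*_{t,c} + ε_{t,c}C_max, C_{t,e} ≤ C_max, then J(π) := Σ_{t=1}^T C_t ≤ J(π*) + C_max·T²·ε, where J(π*) := Σ_{t=1}^T C*_{t,c}. -/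
/-- Quadratic error bound for behavior cloning:
`J(π) = Σ_t C_t ≤ J(π*) + C_max·T²·ε`. -/
theorem stmt_6 (T : ℕ) (hT : 1 ≤ T) (Cmax εbar : ℝ) (hCmax : 0 ≤ Cmax) (hεbar : 0 ≤ εbar)
    (C Cc Ce Cstar ε εc εe p : ℕ → ℝ)
    (hp : ∀ t, t ≤ T → p t ∈ Set.Icc (0:ℝ) 1) (hp0 : p 0 = 1)
    (hεc : ∀ t ∈ Finset.Icc 1 T, εc t ∈ Set.Icc (0:ℝ) 1)
    (hεe : ∀ t ∈ Finset.Icc 1 T, εe t ∈ Set.Icc (0:ℝ) 1)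
    (hεdef : ∀ t ∈ Finset.Icc 1 T, ε t = p (t - 1) * εc t + (1 - p (t - 1)) * εe t)
    (hprec : ∀ t ∈ Finset.Icc 1 T, 1 - p t = (1 - p (t - 1)) + p (t - 1) * εc t)
    (hCc : ∀ t ∈ Finset.Icc 1 T, Cc t ∈ Set.Icc 0 Cmax)
    (hCe : ∀ t ∈ Finset.Icc 1 T, Ce t ≤ Cmax)
    (hCe0 : ∀ t ∈ Finset.Icc 1 T, 0 ≤ Ce t)
    (hCdef : ∀ t ∈ Finset.Icc 1 T, C t = p (t - 1) * Cc t + (1 - p (t - 1)) * Ce t)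
    (hCcb : ∀ t ∈ Finset.Icc 1 T, Cc t ≤ Cstar t + εc t * Cmax)
    (hCstar : ∀ t ∈ Finset.Icc 1 T, 0 ≤ Cstar t)
    (havg : (1 / (T : ℝ)) * ∑ t ∈ Finset.Icc 1 T, ε t ≤ εbar) :
    ∑ t ∈ Finset.Icc 1 T, C t ≤ (∑ t ∈ Finset.Icc 1 T, Cstar t) + Cmax * (T : ℝ) ^ 2 * εbar := by
  have hTpos : (0:ℝ) < T := by exact_mod_cast hT
  -- each ε t is nonnegative
  have hεnonneg : ∀ s ∈ Finset.Icc 1 T, 0 ≤ ε s := by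
    intro s hs
    obtain ⟨h1, h2⟩ := Finset.mem_Icc.mp hs
    have hps := hp (s - 1) (by omega)
    have hc := hεc s hs
    have he := hεe s hs
    rw [hεdef s hs]
    nlinarith [hps.1, hps.2, hc.1, hc.2, he.1, he.2]
  -- total error bound
  have hsum_le : ∑ s ∈ Finset.Icc 1 T, ε s ≤ (T : ℝ) * εbar := by
    have h := mul_le_mul_of_nonneg_left havg (le_of_lt hTpos)
    rw [← mul_assoc, mul_one_div, div_self (ne_of_gt hTpos), one_mul] at h
    linarith
  -- key identity: 1 - p t = Σ_{s=1}^t p(s-1) εc s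
  have key : ∀ t, t ≤ T → 1 - p t = ∑ s ∈ Finset.Icc 1 t, p (s - 1) * εc s := by
    intro t
    induction t with
    | zero => intro _; simp [hp0]
    | succ n ih =>
      intro h
      have hn := ih (by omega)
      have hmem : n + 1 ∈ Finset.Icc 1 T := Finset.mem_Icc.mpr ⟨by omega, h⟩
      have hrec := hprec (n + 1) hmem
      simp only [Nat.add_sub_cancel] at hrec
      rw [Finset.sum_Icc_succ_top (by omega : 1 ≤ n + 1), ← hn, Nat.add_sub_cancel]
      linarith
  -- hence 1 - p t ≤ Σ ε
  have hpt : ∀ t, t ≤ T → 1 - p t ≤ ∑ s ∈ Finset.Icc 1 T, ε s := by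
    intro t ht
    rw [key t ht]
    calc ∑ s ∈ Finset.Icc 1 t, p (s - 1) * εc s
        ≤ ∑ s ∈ Finset.Icc 1 t, ε s := by
          apply Finset.sum_le_sum
          intro s hs
          obtain ⟨h1, h2⟩ := Finset.mem_Icc.mp hs
          have hsT : s ∈ Finset.Icc 1 T := Finset.mem_Icc.mpr ⟨h1, h2.trans ht⟩
          have he := hεe s hsT
          have hps := hp (s - 1) (by omega)
          rw [hεdef s hsT]
          nlinarith [hps.1, hps.2, he.1, he.2]
      _ ≤ ∑ s ∈ Finset.Icc 1 T, ε s :=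
          Finset.sum_le_sum_of_subset_of_nonneg
            (Finset.Icc_subset_Icc_right ht) (fun s hs _ => hεnonneg s hs)
  -- termwise cost bound
  have hCb : ∀ t ∈ Finset.Icc 1 T, C t ≤ Cstar t + Cmax * (1 - p t) := by
    intro t ht
    obtain ⟨h1, h2⟩ := Finset.mem_Icc.mp ht
    have hps := hp (t - 1) (by omega)
    have hcc := hCc t ht
    have hce := hCe t ht
    have hce0 := hCe0 t ht
    have hccb := hCcb t ht
    have hcs := hCstar t ht
    have hec := hεc t ht
    have hpr := hprec t ht
    rw [hCdef t ht]
    nlinarith [hps.1, hps.2, hec.1, hec.2, hcc.1, hcc.2]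
  calc ∑ t ∈ Finset.Icc 1 T, C t
      ≤ ∑ t ∈ Finset.Icc 1 T, (Cstar t + Cmax * (1 - p t)) := Finset.sum_le_sum hCb
    _ = (∑ t ∈ Finset.Icc 1 T, Cstar t) + Cmax * ∑ t ∈ Finset.Icc 1 T, (1 - p t) := by
        rw [Finset.sum_add_distrib, Finset.mul_sum]
    _ ≤ (∑ t ∈ Finset.Icc 1 T, Cstar t) + Cmax * (T : ℝ) ^ 2 * εbar := by
        have hsum2 : ∑ t ∈ Finset.Icc 1 T, (1 - p t) ≤ (T : ℝ) * ((T : ℝ) * εbar) := by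
          calc ∑ t ∈ Finset.Icc 1 T, (1 - p t)
              ≤ ∑ t ∈ Finset.Icc 1 T, ∑ s ∈ Finset.Icc 1 T, ε s := by
                apply Finset.sum_le_sum
                intro t ht
                exact hpt t (Finset.mem_Icc.mp ht).2
            _ = (T : ℝ) * ∑ s ∈ Finset.Icc 1 T, ε s := by
                rw [Finset.sum_const, Nat.card_Icc]
                simp [nsmul_eq_mul]
            _ ≤ (T : ℝ) * ((T : ℝ) * εbar) :=
                mul_le_mul_of_nonneg_left hsum_le (by positivity)
        nlinarith [hsum2]
end

section
/- Let l_max ≥ 0, and for each i ∈ {1,…,N} let L_i, l_i ∈ [0, l_max] and β_i ∈ [0,1] satisfy L_i ≤ l_i + l_max·min(1, T·β_i), where T ≥ 1. Suppose β is monotonically decreasing and let n_β = max{n ≤ N : β_n > 1/T} (or 0 if no such n). Then (1/N)Σ_{i=1}^N L_i ≤ (1/N)Σ_{i=1}^N l_i + (l_max/N)·(n_β + T·Σ_{i=n_β+1}^N β_i). -/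
open Finset

theorem sum_Icc_min_one_le (g : ℕ → ℝ) (n N : ℕ) :
    ∑ i ∈ Icc 1 N, min 1 (g i) ≤ n + ∑ i ∈ Icc (n + 1) N, g i := by
  rw [← sum_filter_add_sum_filter_not (Icc 1 N) (· ≤ n)]
  have head : ∑ i ∈ (Icc 1 N).filter (· ≤ n), min 1 (g i) ≤ n :=
    calc ∑ i ∈ (Icc 1 N).filter (· ≤ n), min 1 (g i)
        ≤ ∑ _i ∈ (Icc 1 N).filter (· ≤ n), (1 : ℝ) := sum_le_sum fun i _ => min_le_left _ _
      _ = #((Icc 1 N).filter (· ≤ n)) := by simp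
      _ ≤ #(Icc 1 n) := by
        gcongr
        intro i
        simp only [mem_filter, mem_Icc]
        omega
      _ = n := by simp
  have tail_eq : (Icc 1 N).filter (fun i => ¬ i ≤ n) = Icc (n + 1) N := by
    ext i
    simp only [mem_filter, mem_Icc]
    omega
  rw [tail_eq]
  linarith [sum_le_sum fun i (_ : i ∈ Icc (n + 1) N) => min_le_right 1 (g i)]

theorem stmt_7_general (N T : ℕ) (lmax : ℝ) (hlmax : 0 ≤ lmax)
    (L l β : ℕ → ℝ)
    (hbound : ∀ i ∈ Finset.Icc 1 N, L i ≤ l i + lmax * min 1 ((T : ℝ) * β i))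
    (nβ : ℕ) :
    (1 / (N : ℝ)) * ∑ i ∈ Finset.Icc 1 N, L i ≤
      (1 / (N : ℝ)) * ∑ i ∈ Finset.Icc 1 N, l i +
        (lmax / N) * ((nβ : ℝ) + (T : ℝ) * ∑ i ∈ Finset.Icc (nβ + 1) N, β i) := by
  have hcap : ∑ i ∈ Icc 1 N, min 1 ((T : ℝ) * β i) ≤ nβ + T * ∑ i ∈ Icc (nβ + 1) N, β i := by
    simpa only [mul_sum] using sum_Icc_min_one_le (fun i => (T : ℝ) * β i) nβ N
  have hsum : ∑ i ∈ Icc 1 N, L i ≤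
      ∑ i ∈ Icc 1 N, l i + lmax * (nβ + T * ∑ i ∈ Icc (nβ + 1) N, β i) :=
    calc ∑ i ∈ Icc 1 N, L i
        ≤ ∑ i ∈ Icc 1 N, l i + lmax * ∑ i ∈ Icc 1 N, min 1 ((T : ℝ) * β i) := by
          rw [mul_sum, ← sum_add_distrib]
          exact sum_le_sum hbound
      _ ≤ _ := by gcongr
  calc (1 / (N : ℝ)) * ∑ i ∈ Icc 1 N, L i
      ≤ (1 / (N : ℝ)) * (∑ i ∈ Icc 1 N, l i + lmax * (nβ + T * ∑ i ∈ Icc (nβ + 1) N, β i)) := by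
        gcongr
    _ = _ := by ring

/-- Core averaging step in the DAGGER regret analysis:
`(1/N)Σ L_i ≤ (1/N)Σ l_i + (l_max/N)·(n_β + T·Σ_{i=n_β+1}^N β_i)`. -/
theorem stmt_7 (N T : ℕ) (hN : 1 ≤ N) (hT : 1 ≤ T) (lmax : ℝ) (hlmax : 0 ≤ lmax)
    (L l β : ℕ → ℝ)
    (hL : ∀ i ∈ Finset.Icc 1 N, L i ∈ Set.Icc 0 lmax)
    (hl : ∀ i ∈ Finset.Icc 1 N, l i ∈ Set.Icc 0 lmax)
    (hβ : ∀ i ∈ Finset.Icc 1 N, β i ∈ Set.Icc (0:ℝ) 1)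
    (hbound : ∀ i ∈ Finset.Icc 1 N, L i ≤ l i + lmax * min 1 ((T : ℝ) * β i))
    (hmono : ∀ i j, i ≤ j → β j ≤ β i)
    (nβ : ℕ) (hnβN : nβ ≤ N)
    (hnβ_max : ∀ n ∈ Finset.Icc 1 N, β n > 1 / (T : ℝ) → n ≤ nβ)
    (hnβ_mem : nβ = 0 ∨ β nβ > 1 / (T : ℝ)) :
    (1 / (N : ℝ)) * ∑ i ∈ Finset.Icc 1 N, L i ≤
      (1 / (N : ℝ)) * ∑ i ∈ Finset.Icc 1 N, l i +
        (lmax / N) * ((nβ : ℝ) + (T : ℝ) * ∑ i ∈ Finset.Icc (nβ + 1) N, β i) :=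
  stmt_7_general N T lmax hlmax L l β hbound nβ
end
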